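/- Let d ∈ ℕ and let h ∈ 𝒯[t] be a polynomial with coefficients in 𝒯. Let h(Han_d) ∈ M_{d+1}(𝒯) be the evaluation of h at the matrix Han_d. Then the pure trace polynomial tr(h(Han_d) · Han_d · h(Han_d)), where tr is the trace of a matrix over the commutative ring 𝒯, belongs to Ω. In fact, tr(h(Han_d)·Han_d·h(Han_d)) = Σ_{k=1}^{d+1} Tr((h(Han_d)w)_k · (h(Han_d)w)_kᵀ) where wᵀ = (1, x, …, x^d). -/

import Mathlib

noncomputable section

/-- The ring 𝒯 of pure trace polynomials: `MvPolynomial.X j` stands for the symbol `Tr(x^j)`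
(for `j ≥ 1`; the variable of index `0` is unused). -/
abbrev TP : Type := MvPolynomial ℕ ℝ

/-- The ring 𝔗 = 𝒯[x] of univariate trace polynomials. -/
abbrev TPoly : Type := Polynomial TP

/-- The symbol `T_j = Tr(x^j)`, with `T₀ = Tr(1) = 1`. -/
def Tj (j : ℕ) : TP := if j = 0 then 1 else MvPolynomial.X j

/-- The 𝒯-linear trace map `Tr : 𝔗 → 𝒯`, determined by `x^j ↦ T_j` and `Tr(1) = 1`. -/
def TrF (f : TPoly) : TP := f.sum fun j c => c * Tj j

/-- The normalized trace moments `j ↦ (1/n)·tr(X^j)` of a matrix. -/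
def nTr {n : ℕ} (X : Matrix (Fin n) (Fin n) ℝ) (j : ℕ) : ℝ := (n : ℝ)⁻¹ * (X ^ j).trace

/-- Evaluation of a pure trace polynomial at a matrix (`T_j ↦ (1/n)·tr(X^j)`). -/
def evalT {n : ℕ} (X : Matrix (Fin n) (Fin n) ℝ) (p : TP) : ℝ := MvPolynomial.eval (nTr X) p

/-- Evaluation of a trace polynomial at a symmetric matrix: substitute `X` for `x` and
`(1/n)·tr(X^j)` for `T_j`. -/
def evalM {n : ℕ} (X : Matrix (Fin n) (Fin n) ℝ) (f : TPoly) : Matrix (Fin n) (Fin n) ℝ :=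
  Polynomial.eval₂ ((Matrix.scalar (Fin n)).comp (MvPolynomial.eval (nTr X))) X f

/-- Membership in the preordering generated by `S` inside a commutative ring, where the
allowed squares are squares of elements of `Sq` (take `Sq = Set.univ` for the preordering in
the whole ring): the smallest set containing `S` and the squares of elements of `Sq` that is
closed under addition and multiplication. -/
inductive InPre {R : Type*} [CommRing R] (Sq : Set R) (S : Set R) : R → Prop
  | of {s : R} : s ∈ S → InPre Sq S s
  | sq {r : R} : r ∈ Sq → InPre Sq S (r ^ 2)
  | add {a b : R} : InPre Sq S a → InPre Sq S b → InPre Sq S (a + b)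
  | mul {a b : R} : InPre Sq S a → InPre Sq S b → InPre Sq S (a * b)

/-- The preordering Ω in 𝒯 generated by traces of squares of trace polynomials. -/
def Omega : TP → Prop := InPre Set.univ {p | ∃ g : TPoly, p = TrF (g ^ 2)}

/-- `σ_j(M)`: the coefficients of the characteristic polynomial,
`det(t·I − M) = t^m − σ₁(M) t^{m−1} + ⋯ + (−1)^m σ_m(M)`. -/
def sigmaCoeff {R : Type*} [CommRing R] {m : ℕ} (j : ℕ) (M : Matrix (Fin m) (Fin m) R) : R :=
  (-1 : R) ^ j * M.charpoly.coeff (m - j)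

/-- The Hankel matrix `Han_d` over 𝒯, with `(i,j)` entry `T_{i+j}` (0-indexed), `T₀ = 1`. -/
def HanT (d : ℕ) : Matrix (Fin (d+1)) (Fin (d+1)) TP := fun i j => Tj (i.val + j.val)

/-- Extension of a point `γ ∈ ℝ^{2d}` (where `γ i` is the value of `T_{i+1}`) to all indices,
with `T₀ ↦ 1`. -/
def extPt (d : ℕ) (γ : Fin (2*d) → ℝ) : ℕ → ℝ :=
  fun j => if h : 0 < j ∧ j ≤ 2*d then γ ⟨j - 1, by omega⟩ else 1

/-- Evaluation `s[γ]` of `s ∈ 𝒯_{2d}` at `γ ∈ ℝ^{2d}`. -/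
def evalPt (d : ℕ) (γ : Fin (2*d) → ℝ) (s : TP) : ℝ := MvPolynomial.eval (extPt d γ) s

/-- Evaluation `f[β]` of `f ∈ 𝔗_{2d}` at `β = (b₀, γ) ∈ ℝ^{1+2d}` (`x ↦ b₀`, `T_j ↦ γ_j`). -/
def evalPt' (d : ℕ) (b₀ : ℝ) (γ : Fin (2*d) → ℝ) (f : TPoly) : ℝ :=
  Polynomial.eval₂ (MvPolynomial.eval (extPt d γ)) b₀ f

/-- The real Hankel matrix `Han_d[γ]`. -/
def hankelPt (d : ℕ) (γ : Fin (2*d) → ℝ) : Matrix (Fin (d+1)) (Fin (d+1)) ℝ :=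
  fun i j => extPt d γ (i.val + j.val)

/-- The set `L_S ⊆ ℝ^{2d}`. -/
def LSet (d : ℕ) (S : Finset TP) : Set (Fin (2*d) → ℝ) :=
  {γ | (∀ s ∈ S, 0 ≤ evalPt d γ s) ∧ (hankelPt d γ).PosSemidef}



open Matrix in
private lemma TrF_add' (f g : TPoly) : TrF (f + g) = TrF f + TrF g := by
  unfold TrF
  exact Polynomial.sum_add_index f g _ (fun i => zero_mul _) (fun a b c => add_mul _ _ _)

private lemma TrF_sum' {ι : Type*} (s : Finset ι) (f : ι → TPoly) :
    TrF (∑ i ∈ s, f i) = ∑ i ∈ s, TrF (f i) := by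
  classical
  induction s using Finset.induction with
  | empty => simp [TrF]
  | insert a s hx ih => simp [Finset.sum_insert hx, TrF_add', ih]

private lemma TrF_C_mul_X_pow' (c : TP) (n : ℕ) :
    TrF (Polynomial.C c * Polynomial.X ^ n) = c * Tj n := by
  rw [Polynomial.C_mul_X_pow_eq_monomial]
  simp [TrF, Polynomial.sum_monomial_index, zero_mul]

open Matrix in
private lemma aeval_transpose' {n : ℕ} (A : Matrix (Fin n) (Fin n) TP) (p : Polynomial TP) :
    (Polynomial.aeval A p)ᵀ = Polynomial.aeval Aᵀ p := by
  induction p using Polynomial.induction_on' with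
  | add p q hp hq => simp [map_add, Matrix.transpose_add, hp, hq]
  | monomial m c =>
      have halg : (algebraMap TP (Matrix (Fin n) (Fin n) TP) c)ᵀ = algebraMap _ _ c := by
        simp [Matrix.algebraMap_eq_diagonal, Matrix.diagonal_transpose]
      simp only [Polynomial.aeval_monomial, Matrix.transpose_mul, Matrix.transpose_pow, halg]
      exact (Algebra.commutes c _).symm

/-- `tr(h(Han_d)·Han_d·h(Han_d))` belongs to `Ω`, and equals
`Σ_k Tr((h(Han_d)w)_k (h(Han_d)w)_kᵀ)` for `wᵀ = (1, x, …, x^d)`. -/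
theorem stmt_18 (d : ℕ) (h : Polynomial TP) :
    Omega ((Polynomial.aeval (HanT d) h * HanT d * Polynomial.aeval (HanT d) h).trace) ∧
    (Polynomial.aeval (HanT d) h * HanT d * Polynomial.aeval (HanT d) h).trace =
      ∑ k : Fin (d+1),
        TrF ((((Polynomial.aeval (HanT d) h : Matrix (Fin (d+1)) (Fin (d+1)) TP).map
            Polynomial.C).mulVec (fun i : Fin (d+1) => (Polynomial.X : TPoly) ^ i.val) k) ^ 2)
    := by
  classical
  set M := Polynomial.aeval (HanT d) h with hM
  have hHsym : (HanT d).transpose = HanT d := by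
    ext i j
    simp [HanT, Matrix.transpose_apply, Nat.add_comm]
  have hsym : ∀ i j, M j i = M i j := by
    intro i j
    have := aeval_transpose' (HanT d) h
    rw [hHsym] at this
    have := congrFun (congrFun this i) j
    simpa [Matrix.transpose_apply, hM] using this
  have hv : ∀ k : Fin (d+1),
      (M.map Polynomial.C).mulVec (fun i : Fin (d+1) => (Polynomial.X : TPoly) ^ i.val) k
        = ∑ i : Fin (d+1), Polynomial.C (M k i) * Polynomial.X ^ i.val := by
    intro k
    simp [Matrix.mulVec, dotProduct, Matrix.map_apply]
  have hterm : ∀ k : Fin (d+1),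
      TrF (((M.map Polynomial.C).mulVec
          (fun i : Fin (d+1) => (Polynomial.X : TPoly) ^ i.val) k) ^ 2)
        = ∑ i : Fin (d+1), ∑ j : Fin (d+1), M k i * M k j * HanT d i j := by
    intro k
    rw [hv k, sq, Finset.sum_mul_sum]
    have : ∀ i j : Fin (d+1),
        (Polynomial.C (M k i) * Polynomial.X ^ i.val) *
          (Polynomial.C (M k j) * Polynomial.X ^ j.val)
          = Polynomial.C (M k i * M k j) * Polynomial.X ^ (i.val + j.val) := by
      intro i j
      rw [map_mul, pow_add]; ring
    simp_rw [this]
    rw [TrF_sum']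
    refine Finset.sum_congr rfl fun i _ => ?_
    rw [TrF_sum']
    exact Finset.sum_congr rfl fun j _ => (TrF_C_mul_X_pow' _ _).trans rfl
  have hrhs : (M * HanT d * M).trace
      = ∑ k : Fin (d+1), ∑ i : Fin (d+1), ∑ j : Fin (d+1), M k i * M k j * HanT d i j := by
    simp only [Matrix.trace, Matrix.diag, Matrix.mul_apply, Finset.sum_mul]
    refine Finset.sum_congr rfl fun k _ => ?_
    rw [Finset.sum_comm]
    refine Finset.sum_congr rfl fun i _ => Finset.sum_congr rfl fun j _ => ?_
    rw [hsym j k]; ring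
  have heq : (M * HanT d * M).trace
      = ∑ k : Fin (d+1),
          TrF (((M.map Polynomial.C).mulVec
            (fun i : Fin (d+1) => (Polynomial.X : TPoly) ^ i.val) k) ^ 2) := by
    rw [hrhs]
    exact Finset.sum_congr rfl fun k _ => (hterm k).symm
  refine ⟨?_, heq⟩
  rw [heq]
  have h0 : Omega (0 : TP) := by
    have := InPre.sq (Sq := (Set.univ : Set TP))
      (S := {p | ∃ g : TPoly, p = TrF (g ^ 2)}) (r := 0) (Set.mem_univ _)
    simpa [Omega] using this
  refine Finset.sum_induction _ Omega (fun a b ha hb => InPre.add ha hb) h0 fun k _ => ?_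
  exact InPre.of ⟨_, rfl⟩


end
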